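/- arXiv:1910.14384 — 2 statements merged into one kernel-verified Lean document; each statement's English description precedes it below -/
import Mathlib

section
/- Soundness and completeness of concurrent-monoid-with-boxes axioms for subsumption: for terms s, t, the interpretation of s is subsumed by that of t (there is a homomorphism from ⟦t⟧ to ⟦s⟧) if and only if s ≤ t is derivable from the bimonoid-with-boxes axioms together with the exchange law (s∥t)·(u∥v) ≤ (s·u)∥(t·v) and the box-elimination law [s] ≤ s. -/
/-- A poset with boxes over an alphabet `A`. -/
structure PB (A : Type) : Type 1 where
  Ev : Type
  le : Ev → Ev → Prop
  le_refl : ∀ e, le e e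
  le_trans : ∀ e f g, le e f → le f g → le e g
  le_antisymm : ∀ e f, le e f → le f e → e = f
  lab : Ev → A
  boxes : Set (Set Ev)
  boxes_ne : ∀ B ∈ boxes, B.Nonempty

/-- A homomorphism of posets with boxes: a bijection preserving labels,
order and boxes. -/
structure Hom {A : Type} (P Q : PB A) where
  toFun : P.Ev → Q.Ev
  bij : Function.Bijective toFun
  lab_eq : ∀ e, Q.lab (toFun e) = P.lab e
  mono : ∀ e f, P.le e f → Q.le (toFun e) (toFun f)
  box_pres : ∀ B ∈ P.boxes, toFun '' B ∈ Q.boxes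

/-- Order-reflecting homomorphism. -/
def Hom.OrdRefl {A : Type} {P Q : PB A} (φ : Hom P Q) : Prop :=
  ∀ e f, Q.le (φ.toFun e) (φ.toFun f) → P.le e f

/-- Box-reflecting homomorphism. -/
def Hom.BoxRefl {A : Type} {P Q : PB A} (φ : Hom P Q) : Prop :=
  ∀ B : Set P.Ev, φ.toFun '' B ∈ Q.boxes → B ∈ P.boxes

/-- Isomorphism of posets with boxes. -/
def Iso {A : Type} (P Q : PB A) : Prop :=
  ∃ φ : Hom P Q, φ.OrdRefl ∧ φ.BoxRefl

/-- `Subsume P Q` means `P ⊑ Q` : there is a homomorphism from `Q` to `P`. -/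
def Subsume {A : Type} (P Q : PB A) : Prop := Nonempty (Hom Q P)

/-- The empty poset with boxes. -/
def onePB (A : Type) : PB A where
  Ev := PEmpty
  le := fun _ _ => True
  le_refl := fun e => trivial
  le_trans := fun _ _ _ _ _ => trivial
  le_antisymm := fun e => e.elim
  lab := fun e => e.elim
  boxes := ∅
  boxes_ne := fun _ h => absurd h (Set.notMem_empty _)

/-- The atomic poset with boxes, with a single event labelled `a`. -/
def atomPB {A : Type} (a : A) : PB A where
  Ev := PUnit
  le := fun _ _ => True
  le_refl := fun _ => trivial
  le_trans := fun _ _ _ _ _ => trivial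
  le_antisymm := fun _ _ _ _ => rfl
  lab := fun _ => a
  boxes := ∅
  boxes_ne := fun _ h => absurd h (Set.notMem_empty _)

/-- The order of a sequential composition on the disjoint union of events. -/
def seqLE {A : Type} (P Q : PB A) : P.Ev ⊕ Q.Ev → P.Ev ⊕ Q.Ev → Prop
  | .inl a, .inl b => P.le a b
  | .inr a, .inr b => Q.le a b
  | .inl _, .inr _ => True
  | .inr _, .inl _ => False

/-- Sequential composition of posets with boxes. -/
def seqPB {A : Type} (P Q : PB A) : PB A where
  Ev := P.Ev ⊕ Q.Ev
  le := seqLE P Q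
  le_refl := fun e => by cases e <;> simp [seqLE, PB.le_refl]
  le_trans := fun e f g hef hfg => by
    cases e <;> cases f <;> cases g <;>
      simp_all [seqLE] <;>
      first
        | exact P.le_trans _ _ _ hef hfg
        | exact Q.le_trans _ _ _ hef hfg
  le_antisymm := fun e f hef hfe => by
    cases e <;> cases f <;> simp_all [seqLE]
    · exact P.le_antisymm _ _ hef hfe
    · exact Q.le_antisymm _ _ hef hfe
  lab := Sum.elim P.lab Q.lab
  boxes := (Set.image Sum.inl '' P.boxes) ∪ (Set.image Sum.inr '' Q.boxes)
  boxes_ne := by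
    rintro B (⟨C, hC, rfl⟩ | ⟨C, hC, rfl⟩)
    · exact ((P.boxes_ne C hC).image _)
    · exact ((Q.boxes_ne C hC).image _)

/-- The order of a parallel composition on the disjoint union of events. -/
def parLE {A : Type} (P Q : PB A) : P.Ev ⊕ Q.Ev → P.Ev ⊕ Q.Ev → Prop
  | .inl a, .inl b => P.le a b
  | .inr a, .inr b => Q.le a b
  | .inl _, .inr _ => False
  | .inr _, .inl _ => False

/-- Parallel composition of posets with boxes. -/
def parPB {A : Type} (P Q : PB A) : PB A where
  Ev := P.Ev ⊕ Q.Ev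
  le := parLE P Q
  le_refl := fun e => by cases e <;> simp [parLE, PB.le_refl]
  le_trans := fun e f g hef hfg => by
    cases e <;> cases f <;> cases g <;>
      simp_all [parLE] <;>
      first
        | exact P.le_trans _ _ _ hef hfg
        | exact Q.le_trans _ _ _ hef hfg
  le_antisymm := fun e f hef hfe => by
    cases e <;> cases f <;> simp_all [parLE]
    · exact P.le_antisymm _ _ hef hfe
    · exact Q.le_antisymm _ _ hef hfe
  lab := Sum.elim P.lab Q.lab
  boxes := (Set.image Sum.inl '' P.boxes) ∪ (Set.image Sum.inr '' Q.boxes)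
  boxes_ne := by
    rintro B (⟨C, hC, rfl⟩ | ⟨C, hC, rfl⟩)
    · exact ((P.boxes_ne C hC).image _)
    · exact ((Q.boxes_ne C hC).image _)

/-- Boxing: add the full (nonempty) set of events as a box. -/
def boxPB {A : Type} (P : PB A) : PB A where
  Ev := P.Ev
  le := P.le
  le_refl := P.le_refl
  le_trans := P.le_trans
  le_antisymm := P.le_antisymm
  lab := P.lab
  boxes := P.boxes ∪ {B | B = Set.univ ∧ B.Nonempty}
  boxes_ne := by
    rintro B (hB | ⟨rfl, hne⟩)
    · exact P.boxes_ne B hB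
    · exact hne

/-- Restriction of a poset with boxes to a subset of its events. -/
def restrictPB {A : Type} (P : PB A) (S : Set P.Ev) : PB A where
  Ev := S
  le := fun x y => P.le x.1 y.1
  le_refl := fun x => P.le_refl x.1
  le_trans := fun x y z => P.le_trans x.1 y.1 z.1
  le_antisymm := fun x y h h' => Subtype.ext (P.le_antisymm _ _ h h')
  lab := fun x => P.lab x.1
  boxes := {B | Subtype.val '' B ∈ P.boxes}
  boxes_ne := fun B hB => by
    rcases P.boxes_ne _ hB with ⟨x, ⟨y, hy, rfl⟩⟩
    exact ⟨y, hy⟩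

/-- Forbidden pattern P1 (the `N` pattern). -/
def hasP1 {A : Type} (P : PB A) : Prop :=
  ∃ e1 e2 e3 e4 : P.Ev,
    P.le e1 e3 ∧ P.le e2 e3 ∧ P.le e2 e4 ∧
    ¬ P.le e1 e4 ∧ ¬ P.le e2 e1 ∧ ¬ P.le e4 e3

/-- Forbidden pattern P2 (overlapping non-nested boxes). -/
def hasP2 {A : Type} (P : PB A) : Prop :=
  ∃ (Bx Cx : Set P.Ev) (e1 e2 e3 : P.Ev),
    Bx ∈ P.boxes ∧ Cx ∈ P.boxes ∧
    e1 ∈ Bx \ Cx ∧ e2 ∈ Bx ∩ Cx ∧ e3 ∈ Cx \ Bx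

/-- Forbidden pattern P3. -/
def hasP3 {A : Type} (P : PB A) : Prop :=
  ∃ (Bx : Set P.Ev) (e1 e2 e3 : P.Ev),
    Bx ∈ P.boxes ∧ e1 ∉ Bx ∧ e2 ∈ Bx ∧ e3 ∈ Bx ∧
    P.le e1 e2 ∧ ¬ P.le e1 e3

/-- Forbidden pattern P4. -/
def hasP4 {A : Type} (P : PB A) : Prop :=
  ∃ (Bx : Set P.Ev) (e1 e2 e3 : P.Ev),
    Bx ∈ P.boxes ∧ e1 ∉ Bx ∧ e2 ∈ Bx ∧ e3 ∈ Bx ∧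
    P.le e2 e1 ∧ ¬ P.le e3 e1

/-- A set of events is non-trivial if it is neither empty nor everything. -/
def NonTrivial {A : Type} (P : PB A) (S : Set P.Ev) : Prop :=
  S ≠ ∅ ∧ S ≠ Set.univ

/-- A set of events is nested if every box is contained in it or disjoint from it. -/
def Nested {A : Type} (P : PB A) (S : Set P.Ev) : Prop :=
  ∀ B ∈ P.boxes, B ⊆ S ∨ B ∩ S = ∅

/-- A set of events is prefix if every event in it is below every event outside. -/
def IsPrefix {A : Type} (P : PB A) (S : Set P.Ev) : Prop :=
  ∀ e ∈ S, ∀ f ∉ S, P.le e f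

/-- A set of events is isolated if its events are incomparable with outside events. -/
def Isolated {A : Type} (P : PB A) (S : Set P.Ev) : Prop :=
  ∀ e ∈ S, ∀ f ∉ S, ¬ P.le e f ∧ ¬ P.le f e
/-- Series–parallel terms. -/
inductive Term (A : Type) : Type
  | one : Term A
  | atom (a : A) : Term A
  | seq (s t : Term A) : Term A
  | par (s t : Term A) : Term A
  | box (s : Term A) : Term A

/-- Interpretation of terms as posets with boxes. -/
def semT {A : Type} : Term A → PB A
  | .one => onePB A
  | .atom a => atomPB a
  | .seq s t => seqPB (semT s) (semT t)
  | .par s t => parPB (semT s) (semT t)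
  | .box s => boxPB (semT s)

/-- Derivability in the equational theory of bimonoids with boxes. -/
inductive BimEq {A : Type} : Term A → Term A → Prop
  | seq_assoc (s t u : Term A) : BimEq (.seq s (.seq t u)) (.seq (.seq s t) u)
  | par_assoc (s t u : Term A) : BimEq (.par s (.par t u)) (.par (.par s t) u)
  | par_comm (s t : Term A) : BimEq (.par s t) (.par t s)
  | seq_unit_l (s : Term A) : BimEq (.seq .one s) s
  | seq_unit_r (s : Term A) : BimEq (.seq s .one) s
  | par_unit (s : Term A) : BimEq (.par .one s) s
  | box_box (s : Term A) : BimEq (.box (.box s)) (.box s)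
  | box_one : BimEq (.box .one) .one
  | refl (s : Term A) : BimEq s s
  | symm {s t : Term A} : BimEq s t → BimEq t s
  | trans {s t u : Term A} : BimEq s t → BimEq t u → BimEq s u
  | seq_congr {s s' t t' : Term A} : BimEq s s' → BimEq t t' → BimEq (.seq s t) (.seq s' t')
  | par_congr {s s' t t' : Term A} : BimEq s s' → BimEq t t' → BimEq (.par s t) (.par s' t')
  | box_congr {s s' : Term A} : BimEq s s' → BimEq (.box s) (.box s')

/-- Derivability in the inequational theory of concurrent monoids with boxes:
bimonoid axioms (in both directions) together with exchange and box elimination. -/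
inductive CMLe {A : Type} : Term A → Term A → Prop
  | of_eq {s t : Term A} : BimEq s t → CMLe s t
  | exchange (s t u v : Term A) :
      CMLe (.seq (.par s t) (.par u v)) (.par (.seq s u) (.seq t v))
  | box_le (s : Term A) : CMLe (.box s) s
  | refl (s : Term A) : CMLe s s
  | trans {s t u : Term A} : CMLe s t → CMLe t u → CMLe s u
  | seq_congr {s s' t t' : Term A} : CMLe s s' → CMLe t t' → CMLe (.seq s t) (.seq s' t')
  | par_congr {s s' t t' : Term A} : CMLe s s' → CMLe t t' → CMLe (.par s t) (.par s' t')
  | box_congr {s s' : Term A} : CMLe s s' → CMLe (.box s) (.box s')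

/-!
Soundness: every axiom is witnessed by an explicit homomorphism (an isomorphism for the
bimonoid axioms), and homomorphisms compose and are compatible with the operations.

Completeness, by induction on `t`, given a homomorphism `φ : ⟦t⟧ → ⟦s⟧`. For `t = t₁ ∗ t₂` the
images of the two halves split the events of `s` into `X` and `Xᶜ`, and `φ` restricts to
homomorphisms `⟦t₁⟧ → ⟦s|X⟧`, `⟦t₂⟧ → ⟦s|Xᶜ⟧`, where `s|X` is the syntactic restriction of `s`.
Exchange and box elimination give `s ≤ s|X ∥ s|Xᶜ` for every `X`, and `s ≤ s|X · s|Xᶜ` when `X`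
is a prefix, as it is for `t = t₁ · t₂`. For `t = [t']` the box around all of `⟦t⟧` forces
`s = [s₀]`, and `φ` restricts to `⟦t'⟧ → ⟦s₀⟧` unless `⟦t'⟧` already carries that box, in which
case `[t'] = t'`.
-/

attribute [reducible] onePB atomPB seqPB parPB boxPB restrictPB semT

open Function Set

variable {A : Type}

theorem sumMap_image_mem_boxes {α α' β β' : Type} {f : α → α'} {g : β → β'}
    {𝓑 : Set (Set α)} {𝓑' : Set (Set α')} {𝓒 : Set (Set β)} {𝓒' : Set (Set β')}
    (hf : ∀ B ∈ 𝓑, f '' B ∈ 𝓑') (hg : ∀ C ∈ 𝓒, g '' C ∈ 𝓒') :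
    ∀ D ∈ image Sum.inl '' 𝓑 ∪ image Sum.inr '' 𝓒,
      Sum.map f g '' D ∈ image Sum.inl '' 𝓑' ∪ image Sum.inr '' 𝓒' := by
  rintro _ (⟨B, hB, rfl⟩ | ⟨C, hC, rfl⟩)
  · exact Or.inl ⟨_, hf B hB, by rw [image_image, image_image]; rfl⟩
  · exact Or.inr ⟨_, hg C hC, by rw [image_image, image_image]; rfl⟩

namespace Hom

def id (P : PB A) : Hom P P where
  toFun := _root_.id
  bij := bijective_id
  lab_eq _ := rfl
  mono _ _ h := h
  box_pres B hB := by rwa [image_id]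

def comp {P Q R : PB A} (φ : Hom P Q) (ψ : Hom Q R) : Hom P R where
  toFun := ψ.toFun ∘ φ.toFun
  bij := ψ.bij.comp φ.bij
  lab_eq e := (ψ.lab_eq _).trans (φ.lab_eq e)
  mono e f h := ψ.mono _ _ (φ.mono e f h)
  box_pres B hB := by rw [image_comp]; exact ψ.box_pres _ (φ.box_pres B hB)

def ofEquiv {P Q : PB A} (e : P.Ev ≃ Q.Ev) (lab_eq : ∀ x, Q.lab (e x) = P.lab x)
    (mono : ∀ x y, P.le x y → Q.le (e x) (e y)) (boxes_eq : Q.boxes = image e '' P.boxes) :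
    Hom P Q where
  toFun := e
  bij := e.bijective
  lab_eq := lab_eq
  mono := mono
  box_pres _ hB := boxes_eq ▸ mem_image_of_mem _ hB

def seq {P P' Q Q' : PB A} (φ : Hom P P') (ψ : Hom Q Q') : Hom (seqPB P Q) (seqPB P' Q') where
  toFun := Sum.map φ.toFun ψ.toFun
  bij := ⟨φ.bij.1.sumMap ψ.bij.1, φ.bij.2.sumMap ψ.bij.2⟩
  lab_eq := by rintro (e | e) <;> simp [φ.lab_eq, ψ.lab_eq]
  mono := by
    rintro (e | e) (f | f) h <;> first | trivial | exact φ.mono e f h | exact ψ.mono e f h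
  box_pres := sumMap_image_mem_boxes φ.box_pres ψ.box_pres

def par {P P' Q Q' : PB A} (φ : Hom P P') (ψ : Hom Q Q') : Hom (parPB P Q) (parPB P' Q') where
  toFun := Sum.map φ.toFun ψ.toFun
  bij := ⟨φ.bij.1.sumMap ψ.bij.1, φ.bij.2.sumMap ψ.bij.2⟩
  lab_eq := by rintro (e | e) <;> simp [φ.lab_eq, ψ.lab_eq]
  mono := by
    rintro (e | e) (f | f) h <;> first | trivial | exact φ.mono e f h | exact ψ.mono e f h
  box_pres := sumMap_image_mem_boxes φ.box_pres ψ.box_pres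

theorem image_univ {P Q : PB A} (φ : Hom P Q) : φ.toFun '' univ = univ := by
  rw [Set.image_univ, φ.bij.2.range_eq]

theorem image_eq_univ {P Q : PB A} (φ : Hom P Q) {B : Set P.Ev} :
    φ.toFun '' B = univ ↔ B = univ := by
  rw [← φ.image_univ, φ.bij.1.image_injective.eq_iff]

def box {P Q : PB A} (φ : Hom P Q) : Hom (boxPB P) (boxPB Q) where
  toFun := φ.toFun
  bij := φ.bij
  lab_eq := φ.lab_eq
  mono := φ.mono
  box_pres := by
    rintro B (hB | ⟨rfl, hne⟩)
    · exact Or.inl (φ.box_pres B hB)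
    · exact Or.inr ⟨φ.image_univ, hne.image _⟩

def toBox (P : PB A) : Hom P (boxPB P) where
  toFun := _root_.id
  bij := bijective_id
  lab_eq _ := rfl
  mono _ _ h := h
  box_pres B hB := Or.inl (by rwa [image_id])

def ofBox {P Q : PB A} (φ : Hom (boxPB P) Q) : Hom P Q where
  __ := φ
  box_pres B hB := φ.box_pres B (Or.inl hB)

def unbox {P Q : PB A} (φ : Hom (boxPB P) (boxPB Q)) (hP : univ ∉ P.boxes) : Hom P Q where
  __ := φ
  box_pres B hB := (φ.box_pres B (Or.inl hB)).resolve_right fun h =>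
    hP (φ.image_eq_univ.1 h.1 ▸ hB)

def exchange (P Q R S : PB A) :
    Hom (parPB (seqPB P R) (seqPB Q S)) (seqPB (parPB P Q) (parPB R S)) :=
  ofEquiv (Equiv.sumSumSumComm _ _ _ _) (by rintro ((e | e) | e | e) <;> rfl)
    (by rintro ((e | e) | e | e) ((f | f) | f | f) h <;> trivial)
    (by simp [image_union, image_image, union_assoc, union_left_comm])

end Hom

structure PBEquiv (P Q : PB A) where
  toEquiv : P.Ev ≃ Q.Ev
  lab_eq : ∀ e, Q.lab (toEquiv e) = P.lab e
  le_iff : ∀ e f, P.le e f ↔ Q.le (toEquiv e) (toEquiv f)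
  boxes_eq : Q.boxes = image toEquiv '' P.boxes

namespace PBEquiv

def toHom {P Q : PB A} (E : PBEquiv P Q) : Hom P Q :=
  Hom.ofEquiv E.toEquiv E.lab_eq (fun e f => (E.le_iff e f).1) E.boxes_eq

def symm {P Q : PB A} (E : PBEquiv P Q) : PBEquiv Q P where
  toEquiv := E.toEquiv.symm
  lab_eq e := by rw [← E.lab_eq, Equiv.apply_symm_apply]
  le_iff e f := by rw [E.le_iff, Equiv.apply_symm_apply, Equiv.apply_symm_apply]
  boxes_eq := by simp [E.boxes_eq, image_image]

def seqAssoc (P Q R : PB A) : PBEquiv (seqPB P (seqPB Q R)) (seqPB (seqPB P Q) R) where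
  toEquiv := (Equiv.sumAssoc _ _ _).symm
  lab_eq := by rintro (e | e | e) <;> rfl
  le_iff := by rintro (e | e | e) (f | f | f) <;> exact Iff.rfl
  boxes_eq := by simp [image_union, image_image, union_assoc]

def parAssoc (P Q R : PB A) : PBEquiv (parPB P (parPB Q R)) (parPB (parPB P Q) R) where
  toEquiv := (Equiv.sumAssoc _ _ _).symm
  lab_eq := by rintro (e | e | e) <;> rfl
  le_iff := by rintro (e | e | e) (f | f | f) <;> exact Iff.rfl
  boxes_eq := by simp [image_union, image_image, union_assoc]

def parComm (P Q : PB A) : PBEquiv (parPB P Q) (parPB Q P) where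
  toEquiv := Equiv.sumComm _ _
  lab_eq := by rintro (e | e) <;> rfl
  le_iff := by rintro (e | e) (f | f) <;> exact Iff.rfl
  boxes_eq := by simp [image_union, image_image, union_comm]

def oneSeq (P : PB A) : PBEquiv (seqPB (onePB A) P) P where
  toEquiv := Equiv.emptySum _ _
  lab_eq := Sum.rec nofun fun _ => rfl
  le_iff := Sum.rec nofun fun _ => Sum.rec nofun fun _ => Iff.rfl
  boxes_eq := by simp [image_image]

def seqOne (P : PB A) : PBEquiv (seqPB P (onePB A)) P where
  toEquiv := Equiv.sumEmpty _ _
  lab_eq := Sum.rec (fun _ => rfl) nofun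
  le_iff := Sum.rec (fun _ => Sum.rec (fun _ => Iff.rfl) nofun) nofun
  boxes_eq := by simp [image_image]

def onePar (P : PB A) : PBEquiv (parPB (onePB A) P) P where
  toEquiv := Equiv.emptySum _ _
  lab_eq := Sum.rec nofun fun _ => rfl
  le_iff := Sum.rec nofun fun _ => Sum.rec nofun fun _ => Iff.rfl
  boxes_eq := by simp [image_image]

def boxBox (P : PB A) : PBEquiv (boxPB (boxPB P)) (boxPB P) where
  toEquiv := Equiv.refl _
  lab_eq _ := rfl
  le_iff _ _ := Iff.rfl
  boxes_eq := by simp [union_assoc]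

def boxOne : PBEquiv (boxPB (onePB A)) (onePB A) where
  toEquiv := Equiv.refl _
  lab_eq := nofun
  le_iff _ _ := Iff.rfl
  boxes_eq := by ext; simp [Set.Nonempty]

end PBEquiv

theorem PBEquiv.nonempty_homs {P Q : PB A} (E : PBEquiv P Q) :
    Nonempty (Hom P Q) ∧ Nonempty (Hom Q P) :=
  ⟨⟨E.toHom⟩, ⟨E.symm.toHom⟩⟩

theorem BimEq.nonempty_homs {s t : Term A} (h : BimEq s t) :
    Nonempty (Hom (semT s) (semT t)) ∧ Nonempty (Hom (semT t) (semT s)) := by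
  induction h with
  | seq_assoc => exact (PBEquiv.seqAssoc ..).nonempty_homs
  | par_assoc => exact (PBEquiv.parAssoc ..).nonempty_homs
  | par_comm => exact (PBEquiv.parComm ..).nonempty_homs
  | seq_unit_l => exact (PBEquiv.oneSeq _).nonempty_homs
  | seq_unit_r => exact (PBEquiv.seqOne _).nonempty_homs
  | par_unit => exact (PBEquiv.onePar _).nonempty_homs
  | box_box => exact (PBEquiv.boxBox _).nonempty_homs
  | box_one => exact PBEquiv.boxOne.nonempty_homs
  | refl => exact ⟨⟨Hom.id _⟩, ⟨Hom.id _⟩⟩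
  | symm _ ih => exact ih.symm
  | trans _ _ ih₁ ih₂ =>
    obtain ⟨⟨φ₁⟩, ⟨ψ₁⟩⟩ := ih₁
    obtain ⟨⟨φ₂⟩, ⟨ψ₂⟩⟩ := ih₂
    exact ⟨⟨φ₁.comp φ₂⟩, ⟨ψ₂.comp ψ₁⟩⟩
  | seq_congr _ _ ih₁ ih₂ =>
    obtain ⟨⟨φ₁⟩, ⟨ψ₁⟩⟩ := ih₁
    obtain ⟨⟨φ₂⟩, ⟨ψ₂⟩⟩ := ih₂
    exact ⟨⟨φ₁.seq φ₂⟩, ⟨ψ₁.seq ψ₂⟩⟩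
  | par_congr _ _ ih₁ ih₂ =>
    obtain ⟨⟨φ₁⟩, ⟨ψ₁⟩⟩ := ih₁
    obtain ⟨⟨φ₂⟩, ⟨ψ₂⟩⟩ := ih₂
    exact ⟨⟨φ₁.par φ₂⟩, ⟨ψ₁.par ψ₂⟩⟩
  | box_congr _ ih =>
    obtain ⟨⟨φ⟩, ⟨ψ⟩⟩ := ih
    exact ⟨⟨φ.box⟩, ⟨ψ.box⟩⟩

theorem CMLe.subsume {s t : Term A} (h : CMLe s t) : Subsume (semT s) (semT t) := by
  induction h with
  | of_eq h => exact h.nonempty_homs.2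
  | exchange => exact ⟨Hom.exchange ..⟩
  | box_le => exact ⟨Hom.toBox _⟩
  | refl => exact ⟨Hom.id _⟩
  | trans _ _ ih₁ ih₂ =>
    obtain ⟨φ₁⟩ := ih₁
    obtain ⟨φ₂⟩ := ih₂
    exact ⟨φ₂.comp φ₁⟩
  | seq_congr _ _ ih₁ ih₂ =>
    obtain ⟨φ₁⟩ := ih₁
    obtain ⟨φ₂⟩ := ih₂
    exact ⟨φ₁.seq φ₂⟩
  | par_congr _ _ ih₁ ih₂ =>
    obtain ⟨φ₁⟩ := ih₁
    obtain ⟨φ₂⟩ := ih₂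
    exact ⟨φ₁.par φ₂⟩
  | box_congr _ ih => exact ih.map Hom.box

instance : Trans (@BimEq A) BimEq BimEq := ⟨BimEq.trans⟩

instance : Trans (@CMLe A) CMLe CMLe := ⟨CMLe.trans⟩

namespace BimEq

theorem seq_of_eq_one_right {u v : Term A} (h : BimEq v .one) : BimEq (.seq u v) u :=
  (seq_congr (refl u) h).trans (seq_unit_r u)

theorem seq_of_eq_one_left {u v : Term A} (h : BimEq u .one) : BimEq (.seq u v) v :=
  (seq_congr h (refl v)).trans (seq_unit_l v)

theorem par_of_eq_one_right {u v : Term A} (h : BimEq v .one) : BimEq (.par u v) u :=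
  (par_congr (refl u) h).trans ((par_comm u .one).trans (par_unit u))

theorem par_of_eq_one_left {u v : Term A} (h : BimEq u .one) : BimEq (.par u v) v :=
  (par_congr h (refl v)).trans (par_unit v)

theorem par_par_par_comm (a b c d : Term A) :
    BimEq (.par (.par a b) (.par c d)) (.par (.par a c) (.par b d)) :=
  calc BimEq (.par (.par a b) (.par c d)) (.par a (.par (.par b c) d)) :=
        (par_assoc a b _).symm.trans (par_congr (refl a) (par_assoc b c d))
    BimEq _ (.par a (.par (.par c b) d)) := par_congr (refl a) (par_congr (par_comm b c) (refl d))
    BimEq _ (.par (.par a c) (.par b d)) :=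
        (par_congr (refl a) (par_assoc c b d).symm).trans (par_assoc a c _)

theorem eq_one_of_isEmpty : ∀ {s : Term A}, IsEmpty (semT s).Ev → BimEq s .one
  | .one, _ => refl _
  | .atom _, h => h.elim PUnit.unit
  | .seq _ _, h =>
    (seq_of_eq_one_left (eq_one_of_isEmpty (isEmpty_sum.1 h).1)).trans
      (eq_one_of_isEmpty (isEmpty_sum.1 h).2)
  | .par _ _, h =>
    (par_of_eq_one_left (eq_one_of_isEmpty (isEmpty_sum.1 h).1)).trans
      (eq_one_of_isEmpty (isEmpty_sum.1 h).2)
  | .box u, h => (box_congr (eq_one_of_isEmpty (s := u) h)).trans box_one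

end BimEq

theorem isEmpty_right_of_subsingleton_sum {α β : Type} [Subsingleton (α ⊕ β)] (a : α) :
    IsEmpty β :=
  ⟨fun b => Sum.inl_ne_inr (Subsingleton.elim (Sum.inl a) (Sum.inr b))⟩

theorem isEmpty_left_of_subsingleton_sum {α β : Type} [Subsingleton (α ⊕ β)] (b : β) :
    IsEmpty α :=
  ⟨fun a => Sum.inl_ne_inr (Subsingleton.elim (Sum.inl a) (Sum.inr b))⟩

theorem CMLe.le_atom {a : A} :
    ∀ {s : Term A} [Subsingleton (semT s).Ev] (e : (semT s).Ev), (semT s).lab e = a →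
      CMLe s (.atom a)
  | .one, _, e, _ => e.elim
  | .atom _, _, _, rfl => refl _
  | .seq u v, _, .inl e, he =>
    have : Subsingleton (semT u).Ev := (Sum.inl_injective (β := (semT v).Ev)).subsingleton
    (of_eq (BimEq.seq_of_eq_one_right (BimEq.eq_one_of_isEmpty
      (isEmpty_right_of_subsingleton_sum e)))).trans (le_atom (s := u) e he)
  | .seq u v, _, .inr e, he =>
    have : Subsingleton (semT v).Ev := (Sum.inr_injective (α := (semT u).Ev)).subsingleton
    (of_eq (BimEq.seq_of_eq_one_left (BimEq.eq_one_of_isEmpty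
      (isEmpty_left_of_subsingleton_sum e)))).trans (le_atom (s := v) e he)
  | .par u v, _, .inl e, he =>
    have : Subsingleton (semT u).Ev := (Sum.inl_injective (β := (semT v).Ev)).subsingleton
    (of_eq (BimEq.par_of_eq_one_right (BimEq.eq_one_of_isEmpty
      (isEmpty_right_of_subsingleton_sum e)))).trans (le_atom (s := u) e he)
  | .par u v, _, .inr e, he =>
    have : Subsingleton (semT v).Ev := (Sum.inr_injective (α := (semT u).Ev)).subsingleton
    (of_eq (BimEq.par_of_eq_one_left (BimEq.eq_one_of_isEmpty
      (isEmpty_left_of_subsingleton_sum e)))).trans (le_atom (s := v) e he)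
  | .box u, _, e, he => (box_le u).trans (le_atom (s := u) e he)

theorem image_inl_eq_univ {α β : Type} {C : Set α} :
    Sum.inl '' C = (univ : Set (α ⊕ β)) ↔ C = univ ∧ IsEmpty β := by
  refine ⟨fun h => ⟨eq_univ_of_forall fun a => ?_, ⟨fun b => ?_⟩⟩, ?_⟩
  · simpa using eq_univ_iff_forall.1 h (.inl a)
  · simpa using eq_univ_iff_forall.1 h (.inr b)
  · rintro ⟨rfl, _⟩
    ext (a | b)
    · simp
    · exact isEmptyElim b

theorem image_inr_eq_univ {α β : Type} {C : Set β} :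
    Sum.inr '' C = (univ : Set (α ⊕ β)) ↔ C = univ ∧ IsEmpty α := by
  refine ⟨fun h => ⟨eq_univ_of_forall fun b => ?_, ⟨fun a => ?_⟩⟩, ?_⟩
  · simpa using eq_univ_iff_forall.1 h (.inr b)
  · simpa using eq_univ_iff_forall.1 h (.inl a)
  · rintro ⟨rfl, _⟩
    ext (a | b)
    · exact isEmptyElim a
    · simp

theorem BimEq.exists_eq_box : ∀ {s : Term A}, univ ∈ (semT s).boxes → ∃ s₀, BimEq s (.box s₀)
  | .one, h => h.elim
  | .atom _, h => h.elim
  | .seq u _, .inl ⟨C, hC, hCu⟩ => by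
    obtain ⟨rfl, hv⟩ := image_inl_eq_univ.1 hCu
    obtain ⟨u₀, hu⟩ := exists_eq_box (s := u) hC
    exact ⟨u₀, (seq_of_eq_one_right (eq_one_of_isEmpty hv)).trans hu⟩
  | .seq _ v, .inr ⟨C, hC, hCu⟩ => by
    obtain ⟨rfl, hu⟩ := image_inr_eq_univ.1 hCu
    obtain ⟨v₀, hv⟩ := exists_eq_box (s := v) hC
    exact ⟨v₀, (seq_of_eq_one_left (eq_one_of_isEmpty hu)).trans hv⟩
  | .par u _, .inl ⟨C, hC, hCu⟩ => by
    obtain ⟨rfl, hv⟩ := image_inl_eq_univ.1 hCu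
    obtain ⟨u₀, hu⟩ := exists_eq_box (s := u) hC
    exact ⟨u₀, (par_of_eq_one_right (eq_one_of_isEmpty hv)).trans hu⟩
  | .par _ v, .inr ⟨C, hC, hCu⟩ => by
    obtain ⟨rfl, hu⟩ := image_inr_eq_univ.1 hCu
    obtain ⟨v₀, hv⟩ := exists_eq_box (s := v) hC
    exact ⟨v₀, (par_of_eq_one_left (eq_one_of_isEmpty hu)).trans hv⟩
  | .box u, _ => ⟨u, refl _⟩

theorem BimEq.box_of_univ_mem {s : Term A} (h : univ ∈ (semT s).boxes) : BimEq (.box s) s :=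
  let ⟨_, hs⟩ := exists_eq_box h
  (box_congr hs).trans ((box_box _).trans hs.symm)

theorem eq_empty_or_eq_univ_of_subsingleton {α : Type} [Subsingleton α] (X : Set α) :
    X = ∅ ∨ X = univ :=
  X.eq_empty_or_nonempty.imp_right Subsingleton.eq_univ_of_nonempty

open Classical in
noncomputable def Term.restrict : (s : Term A) → Set (semT s).Ev → Term A
  | .one, _ => .one
  | .atom a, X => if PUnit.unit ∈ X then .atom a else .one
  | .seq u v, X => .seq (u.restrict (Sum.inl ⁻¹' X)) (v.restrict (Sum.inr ⁻¹' X))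
  | .par u v, X => .par (u.restrict (Sum.inl ⁻¹' X)) (v.restrict (Sum.inr ⁻¹' X))
  | .box u, X => if X = univ then .box u else u.restrict X

theorem Term.restrict_univ : ∀ s : Term A, s.restrict univ = s
  | .one => rfl
  | .atom _ => if_pos trivial
  | .seq u v => congrArg₂ Term.seq u.restrict_univ v.restrict_univ
  | .par u v => congrArg₂ Term.par u.restrict_univ v.restrict_univ
  | .box _ => if_pos rfl

/-- `Q` carries at least the structure of `P` restricted to `X`. This is a homomorphism from
`restrictPB P X` to `Q` given by its inverse, which is the direction that can be built by
recursion on terms. -/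
structure Restriction (P : PB A) (X : Set P.Ev) (Q : PB A) where
  incl : Q.Ev → P.Ev
  injective : Injective incl
  range_eq : range incl = X
  lab_eq : ∀ e, P.lab (incl e) = Q.lab e
  le_of_le : ∀ e f, P.le (incl e) (incl f) → Q.le e f
  box_pres : ∀ B ∈ P.boxes, B ⊆ X → incl ⁻¹' B ∈ Q.boxes

theorem range_sumMap {α α' β β' : Type} {f : α → α'} {g : β → β'} {X : Set (α' ⊕ β')}
    (hf : range f = Sum.inl ⁻¹' X) (hg : range g = Sum.inr ⁻¹' X) : range (Sum.map f g) = X := by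
  ext (a | b)
  · simpa [Sum.exists] using Set.ext_iff.1 hf a
  · simpa [Sum.exists] using Set.ext_iff.1 hg b

theorem sumMap_preimage_mem_boxes {α α' β β' : Type} {f : α → α'} {g : β → β'}
    {X : Set (α' ⊕ β')} {𝓑 : Set (Set α)} {𝓑' : Set (Set α')} {𝓒 : Set (Set β)}
    {𝓒' : Set (Set β')} (hf : ∀ B ∈ 𝓑', B ⊆ Sum.inl ⁻¹' X → f ⁻¹' B ∈ 𝓑)
    (hg : ∀ C ∈ 𝓒', C ⊆ Sum.inr ⁻¹' X → g ⁻¹' C ∈ 𝓒) :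
    ∀ D ∈ image Sum.inl '' 𝓑' ∪ image Sum.inr '' 𝓒', D ⊆ X →
      Sum.map f g ⁻¹' D ∈ image Sum.inl '' 𝓑 ∪ image Sum.inr '' 𝓒 := by
  rintro _ (⟨B, hB, rfl⟩ | ⟨C, hC, rfl⟩) hX
  · refine Or.inl ⟨_, hf B hB (image_subset_iff.1 hX), ?_⟩
    ext (a | b) <;> simp
  · refine Or.inr ⟨_, hg C hC (image_subset_iff.1 hX), ?_⟩
    ext (a | b) <;> simp

namespace Restriction

def refl (P : PB A) : Restriction P univ P where
  incl := _root_.id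
  injective := injective_id
  range_eq := range_id
  lab_eq _ := rfl
  le_of_le _ _ h := h
  box_pres _ hB _ := hB

def ofIsEmpty {P Q : PB A} [IsEmpty Q.Ev] {X : Set P.Ev} (hX : X = ∅) : Restriction P X Q where
  incl := isEmptyElim
  injective := injective_of_subsingleton _
  range_eq := by rw [range_eq_empty, hX]
  lab_eq := isEmptyElim
  le_of_le := isEmptyElim
  box_pres B hB hBX := absurd (subset_empty_iff.1 (hX ▸ hBX)) (P.boxes_ne B hB).ne_empty

def seq {P P' Q Q' : PB A} {X : Set (P.Ev ⊕ P'.Ev)} (R : Restriction P (Sum.inl ⁻¹' X) Q)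
    (R' : Restriction P' (Sum.inr ⁻¹' X) Q') : Restriction (seqPB P P') X (seqPB Q Q') where
  incl := Sum.map R.incl R'.incl
  injective := R.injective.sumMap R'.injective
  range_eq := range_sumMap R.range_eq R'.range_eq
  lab_eq := by rintro (e | e) <;> simp [R.lab_eq, R'.lab_eq]
  le_of_le := by
    rintro (e | e) (f | f) h <;> first | trivial | exact R.le_of_le e f h | exact R'.le_of_le e f h
  box_pres := sumMap_preimage_mem_boxes R.box_pres R'.box_pres

def par {P P' Q Q' : PB A} {X : Set (P.Ev ⊕ P'.Ev)} (R : Restriction P (Sum.inl ⁻¹' X) Q)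
    (R' : Restriction P' (Sum.inr ⁻¹' X) Q') : Restriction (parPB P P') X (parPB Q Q') where
  incl := Sum.map R.incl R'.incl
  injective := R.injective.sumMap R'.injective
  range_eq := range_sumMap R.range_eq R'.range_eq
  lab_eq := by rintro (e | e) <;> simp [R.lab_eq, R'.lab_eq]
  le_of_le := by
    rintro (e | e) (f | f) h <;> first | exact h | exact R.le_of_le e f h | exact R'.le_of_le e f h
  box_pres := sumMap_preimage_mem_boxes R.box_pres R'.box_pres

def ofBox {P Q : PB A} {X : Set P.Ev} (R : Restriction P X Q) (hX : X ≠ univ) :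
    Restriction (boxPB P) X Q where
  __ := R
  box_pres := by
    rintro B (hB | ⟨rfl, -⟩) hBX
    · exact R.box_pres B hB hBX
    · exact absurd (univ_subset_iff.1 hBX) hX

end Restriction

theorem Term.nonempty_restriction :
    ∀ (s : Term A) (X : Set (semT s).Ev), Nonempty (Restriction (semT s) X (semT (s.restrict X)))
  | .one, X =>
    show Nonempty (Restriction _ X (onePB A)) from
      ⟨.ofIsEmpty (Subsingleton.elim (α := Set PEmpty) _ _)⟩
  | .atom a, X => by
    by_cases h : PUnit.unit ∈ X
    · obtain rfl : X = univ := eq_univ_of_forall fun _ => h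
      rw [restrict_univ]
      exact ⟨.refl _⟩
    · rw [restrict, if_neg h]
      exact ⟨.ofIsEmpty (eq_empty_of_forall_notMem fun _ => h)⟩
  | .seq u v, X => ⟨.seq (u.nonempty_restriction _).some (v.nonempty_restriction _).some⟩
  | .par u v, X => ⟨.par (u.nonempty_restriction _).some (v.nonempty_restriction _).some⟩
  | .box u, X => by
    by_cases h : X = univ
    · subst h
      rw [restrict_univ]
      exact ⟨.refl _⟩
    · rw [restrict, if_neg h]
      exact ⟨(u.nonempty_restriction X).some.ofBox h⟩

noncomputable def Restriction.toHom {P Q : PB A} {X : Set P.Ev} (R : Restriction P X Q) :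
    Hom (restrictPB P X) Q :=
  let e : X ≃ Q.Ev :=
    (Equiv.setCongr R.range_eq.symm).trans (Equiv.ofInjective _ R.injective).symm
  have incl_e (x : X) : R.incl (e x) = x := Equiv.apply_ofInjective_symm R.injective _
  { toFun := e
    bij := e.bijective
    lab_eq x := by rw [← R.lab_eq, incl_e]
    mono x y h := R.le_of_le _ _ (by rwa [incl_e, incl_e])
    box_pres B hB := by
      have : e '' B = R.incl ⁻¹' (Subtype.val '' B) := by
        ext q
        constructor
        · rintro ⟨x, hx, rfl⟩
          exact ⟨x, hx, (incl_e x).symm⟩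
        · rintro ⟨x, hx, hxq⟩
          exact ⟨x, hx, R.injective (by rw [incl_e, hxq])⟩
      exact this ▸ R.box_pres _ hB (by rintro _ ⟨x, -, rfl⟩; exact x.2) }

theorem Function.Bijective.range_comp_inr {α β γ : Type} {f : α ⊕ β → γ} (hf : Bijective f) :
    range (f ∘ Sum.inr) = (range (f ∘ Sum.inl))ᶜ := by
  rw [range_comp, range_comp, ← image_compl_eq hf, compl_range_inl]

namespace Hom

def toRestrictRange {T P : PB A} (f : T.Ev → P.Ev) (hf : Injective f)
    (lab_eq : ∀ e, P.lab (f e) = T.lab e) (mono : ∀ e e', T.le e e' → P.le (f e) (f e'))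
    (box_pres : ∀ B ∈ T.boxes, f '' B ∈ P.boxes) : Hom T (restrictPB P (range f)) where
  toFun := rangeFactorization f
  bij := rangeFactorization_bijective.2 hf
  lab_eq := lab_eq
  mono := mono
  box_pres B hB := by
    show Subtype.val '' (rangeFactorization f '' B) ∈ P.boxes
    rw [image_image]
    exact box_pres B hB

def parLeft {T₁ T₂ P : PB A} (φ : Hom (parPB T₁ T₂) P) :
    Hom T₁ (restrictPB P (range (φ.toFun ∘ Sum.inl))) :=
  toRestrictRange _ (φ.bij.1.comp Sum.inl_injective) (fun e => φ.lab_eq (.inl e))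
    (fun e e' => φ.mono (.inl e) (.inl e'))
    (fun B hB => image_comp φ.toFun _ B ▸ φ.box_pres _ (Or.inl ⟨B, hB, rfl⟩))

def parRight {T₁ T₂ P : PB A} (φ : Hom (parPB T₁ T₂) P) :
    Hom T₂ (restrictPB P (range (φ.toFun ∘ Sum.inr))) :=
  toRestrictRange _ (φ.bij.1.comp Sum.inr_injective) (fun e => φ.lab_eq (.inr e))
    (fun e e' => φ.mono (.inr e) (.inr e'))
    (fun B hB => image_comp φ.toFun _ B ▸ φ.box_pres _ (Or.inr ⟨B, hB, rfl⟩))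

def parToSeq (P Q : PB A) : Hom (parPB P Q) (seqPB P Q) where
  toFun := _root_.id
  bij := bijective_id
  lab_eq _ := rfl
  mono := by rintro (e | e) (f | f) h <;> first | exact h | trivial
  box_pres B hB := by rwa [image_id]

theorem isPrefix_range_inl {T₁ T₂ P : PB A} (φ : Hom (seqPB T₁ T₂) P) :
    IsPrefix P (range (φ.toFun ∘ Sum.inl)) := by
  rintro _ ⟨e, rfl⟩ f hf
  obtain ⟨f, rfl⟩ : f ∈ range (φ.toFun ∘ Sum.inr) := by
    rwa [φ.bij.range_comp_inr]
  exact φ.mono (.inl e) (.inr f) trivial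

theorem nonempty_restrict {T₁ T₂ : PB A} {s : Term A} (φ : Hom (parPB T₁ T₂) (semT s)) :
    Nonempty (Hom T₁ (semT (s.restrict (range (φ.toFun ∘ Sum.inl))))) ∧
      Nonempty (Hom T₂ (semT (s.restrict (range (φ.toFun ∘ Sum.inl))ᶜ))) := by
  refine ⟨⟨φ.parLeft.comp (s.nonempty_restriction _).some.toHom⟩, ?_⟩
  rw [← φ.bij.range_comp_inr]
  exact ⟨φ.parRight.comp (s.nonempty_restriction _).some.toHom⟩

end Hom

theorem IsPrefix.eq_empty_or_eq_univ_of_par {P Q : PB A} [Nonempty P.Ev] [Nonempty Q.Ev]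
    {X : Set (parPB P Q).Ev} (hX : IsPrefix (parPB P Q) X) : X = ∅ ∨ X = univ := by
  have side : ∀ x ∈ X, ∀ y ∉ X, x.isLeft = y.isLeft := by
    rintro (x | x) hx (y | y) hy <;> first | rfl | exact (hX _ hx _ hy).elim
  by_contra! h
  obtain ⟨z, hz⟩ := h.1
  obtain ⟨w, hw⟩ := (ne_univ_iff_exists_notMem X).1 h.2
  obtain ⟨o, ho⟩ : ∃ o : P.Ev ⊕ Q.Ev, o.isLeft ≠ z.isLeft := by
    rcases z with _ | _
    · exact ⟨.inr (Classical.arbitrary _), by simp⟩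
    · exact ⟨.inl (Classical.arbitrary _), by simp⟩
  by_cases hoX : o ∈ X
  · exact ho ((side o hoX w hw).trans (side z hz w hw).symm)
  · exact ho (side z hz o hoX).symm

namespace Term

theorem restrict_empty_eq_one (s : Term A) : BimEq (s.restrict ∅) .one :=
  BimEq.eq_one_of_isEmpty (range_eq_empty_iff.1 (s.nonempty_restriction ∅).some.range_eq)

theorem restrict_eq_one_of_isEmpty {s : Term A} [IsEmpty (semT s).Ev] (X : Set (semT s).Ev) :
    BimEq (s.restrict X) .one :=
  Subsingleton.elim X ∅ ▸ s.restrict_empty_eq_one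

theorem le_par_restrict_of_trivial (s : Term A) {X : Set (semT s).Ev} (hX : X = ∅ ∨ X = univ) :
    CMLe s (.par (s.restrict X) (s.restrict Xᶜ)) := by
  rcases hX with rfl | rfl
  · rw [compl_empty, restrict_univ]
    exact .of_eq (BimEq.par_of_eq_one_left s.restrict_empty_eq_one).symm
  · rw [compl_univ, restrict_univ]
    exact .of_eq (BimEq.par_of_eq_one_right s.restrict_empty_eq_one).symm

theorem le_seq_restrict_of_trivial (s : Term A) {X : Set (semT s).Ev} (hX : X = ∅ ∨ X = univ) :
    CMLe s (.seq (s.restrict X) (s.restrict Xᶜ)) := by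
  rcases hX with rfl | rfl
  · rw [compl_empty, restrict_univ]
    exact .of_eq (BimEq.seq_of_eq_one_left s.restrict_empty_eq_one).symm
  · rw [compl_univ, restrict_univ]
    exact .of_eq (BimEq.seq_of_eq_one_right s.restrict_empty_eq_one).symm

theorem restrict_box_of_nonTrivial (u : Term A) {X : Set (semT u).Ev}
    (hX : NonTrivial (semT u) X) :
    (Term.box u).restrict X = u.restrict X ∧ (Term.box u).restrict Xᶜ = u.restrict Xᶜ :=
  ⟨if_neg hX.2, if_neg (compl_ne_univ.2 (nonempty_iff_ne_empty.2 hX.1))⟩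

theorem le_par_restrict : ∀ (s : Term A) (X : Set (semT s).Ev),
    CMLe s (.par (s.restrict X) (s.restrict Xᶜ))
  | .one, X => le_par_restrict_of_trivial _ (eq_empty_or_eq_univ_of_subsingleton X)
  | .atom _, X => le_par_restrict_of_trivial _ (eq_empty_or_eq_univ_of_subsingleton X)
  | .seq u v, X =>
    (CMLe.seq_congr (u.le_par_restrict _) (v.le_par_restrict _)).trans (.exchange ..)
  | .par u v, X =>
    (CMLe.par_congr (u.le_par_restrict _) (v.le_par_restrict _)).trans
      (.of_eq (BimEq.par_par_par_comm ..))
  | .box u, X => by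
    by_cases hX : X = ∅ ∨ X = univ
    · exact le_par_restrict_of_trivial _ hX
    obtain ⟨hXu, hXcu⟩ := restrict_box_of_nonTrivial u (not_or.1 hX)
    rw [hXu, hXcu]
    exact (CMLe.box_le u).trans (u.le_par_restrict X)

theorem le_seq_restrict : ∀ (s : Term A) (X : Set (semT s).Ev), IsPrefix (semT s) X →
    CMLe s (.seq (s.restrict X) (s.restrict Xᶜ))
  | .one, X, _ => le_seq_restrict_of_trivial _ (eq_empty_or_eq_univ_of_subsingleton X)
  | .atom _, X, _ => le_seq_restrict_of_trivial _ (eq_empty_or_eq_univ_of_subsingleton X)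
  | .seq u v, X, hX => by
    have hu : IsPrefix (semT u) (Sum.inl ⁻¹' X) := fun e he f hf => hX (.inl e) he (.inl f) hf
    have hv : IsPrefix (semT v) (Sum.inr ⁻¹' X) := fun e he f hf => hX (.inr e) he (.inr f) hf
    simp only [restrict, preimage_compl]
    rcases (Sum.inr ⁻¹' X).eq_empty_or_nonempty with hX₂ | ⟨f, hf⟩
    · rw [hX₂, compl_empty, restrict_univ]
      calc CMLe (u.seq v) (.seq (.seq (u.restrict _) (u.restrict (Sum.inl ⁻¹' X)ᶜ)) v) :=
            .seq_congr (u.le_seq_restrict _ hu) (.refl v)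
        CMLe _ (.seq (u.restrict _) (.seq (u.restrict _) v)) := .of_eq (BimEq.seq_assoc ..).symm
        CMLe _ _ := .of_eq (.seq_congr (BimEq.seq_of_eq_one_right v.restrict_empty_eq_one).symm
          (.refl _))
    · have hX₁ : Sum.inl ⁻¹' X = univ :=
        eq_univ_of_forall fun e => by_contra fun he => hX (.inr f) hf (.inl e) he
      rw [hX₁, compl_univ, restrict_univ]
      calc CMLe (u.seq v) (.seq u (.seq (v.restrict _) (v.restrict (Sum.inr ⁻¹' X)ᶜ))) :=
            .seq_congr (.refl u) (v.le_seq_restrict _ hv)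
        CMLe _ (.seq (.seq u (v.restrict _)) (v.restrict _)) := .of_eq (BimEq.seq_assoc ..)
        CMLe _ _ := .of_eq (.seq_congr (.refl _)
          (BimEq.seq_of_eq_one_left u.restrict_empty_eq_one).symm)
  | .par u v, X, hX => by
    have hu : IsPrefix (semT u) (Sum.inl ⁻¹' X) := fun e he f hf => hX (.inl e) he (.inl f) hf
    have hv : IsPrefix (semT v) (Sum.inr ⁻¹' X) := fun e he f hf => hX (.inr e) he (.inr f) hf
    rcases isEmpty_or_nonempty (semT v).Ev with hv' | hv'
    · simp only [restrict, preimage_compl]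
      calc CMLe (u.par v) u := .of_eq (BimEq.par_of_eq_one_right (BimEq.eq_one_of_isEmpty hv'))
        CMLe _ (.seq (u.restrict _) (u.restrict (Sum.inl ⁻¹' X)ᶜ)) := u.le_seq_restrict _ hu
        CMLe _ _ := .of_eq (.seq_congr
          (BimEq.par_of_eq_one_right (restrict_eq_one_of_isEmpty _)).symm
          (BimEq.par_of_eq_one_right (restrict_eq_one_of_isEmpty _)).symm)
    rcases isEmpty_or_nonempty (semT u).Ev with hu' | hu'
    · simp only [restrict, preimage_compl]
      calc CMLe (u.par v) v := .of_eq (BimEq.par_of_eq_one_left (BimEq.eq_one_of_isEmpty hu'))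
        CMLe _ (.seq (v.restrict _) (v.restrict (Sum.inr ⁻¹' X)ᶜ)) := v.le_seq_restrict _ hv
        CMLe _ _ := .of_eq (.seq_congr
          (BimEq.par_of_eq_one_left (restrict_eq_one_of_isEmpty _)).symm
          (BimEq.par_of_eq_one_left (restrict_eq_one_of_isEmpty _)).symm)
    exact le_seq_restrict_of_trivial _ hX.eq_empty_or_eq_univ_of_par
  | .box u, X, hX => by
    by_cases hX' : X = ∅ ∨ X = univ
    · exact le_seq_restrict_of_trivial _ hX'
    obtain ⟨hXu, hXcu⟩ := restrict_box_of_nonTrivial u (not_or.1 hX')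
    rw [hXu, hXcu]
    exact (CMLe.box_le u).trans (u.le_seq_restrict X hX)

end Term

theorem CMLe.of_subsume : ∀ {s t : Term A}, Subsume (semT s) (semT t) → CMLe s t
  | s, .one, ⟨φ⟩ => .of_eq (BimEq.eq_one_of_isEmpty φ.bij.2.isEmpty)
  | s, .atom _, ⟨φ⟩ =>
    have := φ.bij.2.subsingleton
    le_atom (φ.toFun PUnit.unit) (φ.lab_eq _)
  | s, .seq t₁ t₂, ⟨φ⟩ =>
    let ⟨ψ₁, ψ₂⟩ := ((Hom.parToSeq _ _).comp φ).nonempty_restrict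
    (s.le_seq_restrict _ φ.isPrefix_range_inl).trans
      (.seq_congr (of_subsume ψ₁) (of_subsume ψ₂))
  | s, .par t₁ t₂, ⟨φ⟩ =>
    let ⟨ψ₁, ψ₂⟩ := φ.nonempty_restrict
    (s.le_par_restrict _).trans (.par_congr (of_subsume ψ₁) (of_subsume ψ₂))
  | s, .box t, ⟨φ⟩ => by
    by_cases ht : univ ∈ (semT t).boxes
    · exact (of_subsume (t := t) ⟨φ.ofBox⟩).trans (.of_eq (BimEq.box_of_univ_mem ht).symm)
    rcases isEmpty_or_nonempty (semT t).Ev with ht' | ht'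
    · have hs : IsEmpty (semT s).Ev := φ.bij.2.isEmpty
      have ht : BimEq (.box t) .one := BimEq.eq_one_of_isEmpty ht'
      exact .of_eq ((BimEq.eq_one_of_isEmpty hs).trans ht.symm)
    have hs : univ ∈ (semT s).boxes :=
      φ.image_univ ▸ φ.box_pres univ (Or.inr ⟨rfl, univ_nonempty⟩)
    obtain ⟨s₀, hs₀⟩ := BimEq.exists_eq_box hs
    obtain ⟨ψ⟩ := hs₀.nonempty_homs.1
    exact (CMLe.of_eq hs₀).trans (.box_congr (of_subsume (t := t) ⟨(φ.comp ψ).unbox ht⟩))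

/-- Soundness and completeness of the concurrent-monoid-with-boxes axioms for
subsumption: `⟦s⟧ ⊑ ⟦t⟧` iff `s ≤ t` is derivable. -/
theorem concurrent_monoid_completeness (A : Type) (s t : Term A) :
    Subsume (semT s) (semT t) ↔ CMLe s t :=
  ⟨CMLe.of_subsume, CMLe.subsume⟩
end

section
/- For every term e in the syntax with 0 and choice (e ::= 0 | 1 | a | e·f | e∥f | e+f | [e]), there is a finite set T_e of series–parallel terms (without 0 or +) such that e equals the finite join of T_e provably in the bisemiring-with-boxes theory, and the set-of-posets interpretation of e equals (up to isomorphism) { ⟦s⟧ : s ∈ T_e }. -/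
/-- Terms with failure `0` and non-deterministic choice `+`. -/
inductive Term2 (A : Type) : Type
  | zero : Term2 A
  | one : Term2 A
  | atom (a : A) : Term2 A
  | seq (e f : Term2 A) : Term2 A
  | par (e f : Term2 A) : Term2 A
  | plus (e f : Term2 A) : Term2 A
  | box (e : Term2 A) : Term2 A

/-- Embedding of series–parallel terms into the extended syntax. -/
def Term.toTerm2 {A : Type} : Term A → Term2 A
  | .one => .one
  | .atom a => .atom a
  | .seq s t => .seq s.toTerm2 t.toTerm2
  | .par s t => .par s.toTerm2 t.toTerm2
  | .box s => .box s.toTerm2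

/-- Interpretation of extended terms as sets of posets with boxes. -/
def semT2 {A : Type} : Term2 A → Set (PB A)
  | .zero => ∅
  | .one => {onePB A}
  | .atom a => {atomPB a}
  | .seq e f => Set.image2 seqPB (semT2 e) (semT2 f)
  | .par e f => Set.image2 parPB (semT2 e) (semT2 f)
  | .plus e f => semT2 e ∪ semT2 f
  | .box e => boxPB '' semT2 e

/-- Derivability in the equational theory of bisemirings with boxes. -/
inductive BSEq {A : Type} : Term2 A → Term2 A → Prop
  | seq_assoc (s t u : Term2 A) : BSEq (.seq s (.seq t u)) (.seq (.seq s t) u)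
  | par_assoc (s t u : Term2 A) : BSEq (.par s (.par t u)) (.par (.par s t) u)
  | par_comm (s t : Term2 A) : BSEq (.par s t) (.par t s)
  | seq_unit_l (s : Term2 A) : BSEq (.seq .one s) s
  | seq_unit_r (s : Term2 A) : BSEq (.seq s .one) s
  | par_unit (s : Term2 A) : BSEq (.par .one s) s
  | box_box (s : Term2 A) : BSEq (.box (.box s)) (.box s)
  | box_one : BSEq (.box .one) .one
  | plus_assoc (e f g : Term2 A) : BSEq (.plus e (.plus f g)) (.plus (.plus e f) g)
  | plus_comm (e f : Term2 A) : BSEq (.plus e f) (.plus f e)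
  | plus_idem (e : Term2 A) : BSEq (.plus e e) e
  | plus_unit (e : Term2 A) : BSEq (.plus .zero e) e
  | seq_zero_l (e : Term2 A) : BSEq (.seq .zero e) .zero
  | seq_zero_r (e : Term2 A) : BSEq (.seq e .zero) .zero
  | par_zero (e : Term2 A) : BSEq (.par .zero e) .zero
  | seq_distr_l (e f g : Term2 A) :
      BSEq (.seq e (.plus f g)) (.plus (.seq e f) (.seq e g))
  | seq_distr_r (e f g : Term2 A) :
      BSEq (.seq (.plus e f) g) (.plus (.seq e g) (.seq f g))
  | par_distr (e f g : Term2 A) :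
      BSEq (.par e (.plus f g)) (.plus (.par e f) (.par e g))
  | box_zero : BSEq (A := A) (.box .zero) .zero
  | box_plus (e f : Term2 A) : BSEq (.box (.plus e f)) (.plus (.box e) (.box f))
  | refl (e : Term2 A) : BSEq e e
  | symm {e f : Term2 A} : BSEq e f → BSEq f e
  | trans {e f g : Term2 A} : BSEq e f → BSEq f g → BSEq e g
  | seq_congr {e e' f f' : Term2 A} : BSEq e e' → BSEq f f' → BSEq (.seq e f) (.seq e' f')
  | par_congr {e e' f f' : Term2 A} : BSEq e e' → BSEq f f' → BSEq (.par e f) (.par e' f')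
  | plus_congr {e e' f f' : Term2 A} : BSEq e e' → BSEq f f' → BSEq (.plus e f) (.plus e' f')
  | box_congr {e e' : Term2 A} : BSEq e e' → BSEq (.box e) (.box e')

/-!
`T_e` is computed by structural recursion on `e`. Provably, `e` is the join of `T_e` because
`·`, `∥` and `[-]` distribute over `+` and annihilate `0`, so sums can be pushed outwards.
Semantically, `⟦-⟧` is compositional and sequential, parallel composition and boxing respect
isomorphism, so the two sides match term by term.
-/

section Iso

variable {A : Type}

structure PBEquiv_s16 (P Q : PB A) where
  toEquiv : P.Ev ≃ Q.Ev
  lab_eq : ∀ x, Q.lab (toEquiv x) = P.lab x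
  le_iff : ∀ x y, Q.le (toEquiv x) (toEquiv y) ↔ P.le x y
  boxes_eq : Q.boxes = Set.image toEquiv '' P.boxes

theorem iso_iff_nonempty_pbEquiv {P Q : PB A} : Iso P Q ↔ Nonempty (PBEquiv_s16 P Q) := by
  constructor
  · rintro ⟨φ, hord, hbox⟩
    refine ⟨⟨Equiv.ofBijective φ.toFun φ.bij, φ.lab_eq,
      fun x y => ⟨hord x y, φ.mono x y⟩, ?_⟩⟩
    refine Set.Subset.antisymm (fun B hB => ⟨φ.toFun ⁻¹' B, hbox _ ?_, ?_⟩) ?_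
    · rwa [Set.image_preimage_eq B φ.bij.surjective]
    · exact Set.image_preimage_eq B φ.bij.surjective
    · rintro _ ⟨B, hB, rfl⟩
      exact φ.box_pres B hB
  · rintro ⟨i⟩
    refine ⟨⟨i.toEquiv, i.toEquiv.bijective, i.lab_eq, fun x y => (i.le_iff x y).mpr,
      fun B hB => i.boxes_eq ▸ Set.mem_image_of_mem (Set.image i.toEquiv) hB⟩,
      fun x y => (i.le_iff x y).mp, fun B hB => ?_⟩
    obtain ⟨C, hC, hCB⟩ : i.toEquiv '' B ∈ Set.image i.toEquiv '' P.boxes := i.boxes_eq ▸ hB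
    rwa [← Set.image_injective.mpr i.toEquiv.injective hCB]

theorem Iso.refl (P : PB A) : Iso P P :=
  iso_iff_nonempty_pbEquiv.mpr ⟨⟨Equiv.refl _, fun _ => rfl, fun _ _ => Iff.rfl, by simp⟩⟩

theorem image_image_sumMap_union {α β γ δ : Type} (f : α → γ) (g : β → δ)
    (S : Set (Set α)) (T : Set (Set β)) :
    Set.image (Sum.map f g) '' (Set.image Sum.inl '' S ∪ Set.image Sum.inr '' T) =
      Set.image Sum.inl '' (Set.image f '' S) ∪ Set.image Sum.inr '' (Set.image g '' T) := by
  simp only [Set.image_union, Set.image_image]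
  rfl

theorem Iso.seqPB {P P' Q Q' : PB A} (hP : Iso P P') (hQ : Iso Q Q') :
    Iso (seqPB P Q) (seqPB P' Q') := by
  obtain ⟨i⟩ := iso_iff_nonempty_pbEquiv.mp hP
  obtain ⟨j⟩ := iso_iff_nonempty_pbEquiv.mp hQ
  refine iso_iff_nonempty_pbEquiv.mpr ⟨⟨i.toEquiv.sumCongr j.toEquiv, ?_, ?_, ?_⟩⟩
  · rintro (x | x)
    exacts [i.lab_eq x, j.lab_eq x]
  · rintro (x | x) (y | y)
    exacts [i.le_iff x y, Iff.rfl, Iff.rfl, j.le_iff x y]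
  · have h := image_image_sumMap_union i.toEquiv j.toEquiv P.boxes Q.boxes
    rw [← i.boxes_eq, ← j.boxes_eq] at h
    exact h.symm

theorem Iso.parPB {P P' Q Q' : PB A} (hP : Iso P P') (hQ : Iso Q Q') :
    Iso (parPB P Q) (parPB P' Q') := by
  obtain ⟨i⟩ := iso_iff_nonempty_pbEquiv.mp hP
  obtain ⟨j⟩ := iso_iff_nonempty_pbEquiv.mp hQ
  refine iso_iff_nonempty_pbEquiv.mpr ⟨⟨i.toEquiv.sumCongr j.toEquiv, ?_, ?_, ?_⟩⟩
  · rintro (x | x)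
    exacts [i.lab_eq x, j.lab_eq x]
  · rintro (x | x) (y | y)
    exacts [i.le_iff x y, Iff.rfl, Iff.rfl, j.le_iff x y]
  · have h := image_image_sumMap_union i.toEquiv j.toEquiv P.boxes Q.boxes
    rw [← i.boxes_eq, ← j.boxes_eq] at h
    exact h.symm

theorem Function.Surjective.image_image_setOf_univ_nonempty {α β : Type} {f : α → β}
    (hf : Function.Surjective f) :
    Set.image f '' {B | B = Set.univ ∧ B.Nonempty} = {B | B = Set.univ ∧ B.Nonempty} := by
  ext B
  constructor
  · rintro ⟨C, ⟨rfl, hne⟩, rfl⟩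
    exact ⟨Set.image_univ_of_surjective hf, hne.image f⟩
  · rintro ⟨rfl, ⟨x, -⟩⟩
    obtain ⟨y, rfl⟩ := hf x
    exact ⟨Set.univ, ⟨rfl, ⟨y, trivial⟩⟩, Set.image_univ_of_surjective hf⟩

theorem Iso.boxPB {P Q : PB A} (h : Iso P Q) : Iso (boxPB P) (boxPB Q) := by
  obtain ⟨i⟩ := iso_iff_nonempty_pbEquiv.mp h
  refine iso_iff_nonempty_pbEquiv.mpr ⟨⟨i.toEquiv, i.lab_eq, i.le_iff, ?_⟩⟩
  have h := Set.image_union (Set.image i.toEquiv) P.boxes {B | B = Set.univ ∧ B.Nonempty}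
  rw [← i.boxes_eq, i.toEquiv.surjective.image_image_setOf_univ_nonempty] at h
  exact h.symm

end Iso

namespace Term2

variable {A : Type}

def join (L : List (Term A)) : Term2 A :=
  L.foldr (fun s acc => plus s.toTerm2 acc) zero

/-- The set `T_e`, as a list. -/
def terms : Term2 A → List (Term A)
  | zero => []
  | one => [.one]
  | atom a => [.atom a]
  | seq e f => (terms e).flatMap fun s => (terms f).map (Term.seq s)
  | par e f => (terms e).flatMap fun s => (terms f).map (Term.par s)
  | plus e f => terms e ++ terms f
  | box e => (terms e).map Term.box

end Term2

namespace BSEq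

variable {A : Type}

open Term2

theorem plus_zero (e : Term2 A) : BSEq (.plus e .zero) e :=
  (plus_comm e .zero).trans (plus_unit e)

theorem par_zero_r (e : Term2 A) : BSEq (.par e .zero) .zero :=
  (par_comm e .zero).trans (par_zero e)

theorem par_distr_r (e f g : Term2 A) :
    BSEq (.par (.plus e f) g) (.plus (.par e g) (.par f g)) :=
  ((par_comm _ _).trans (par_distr g e f)).trans (plus_congr (par_comm _ _) (par_comm _ _))

theorem join_singleton (s : Term A) : BSEq (join [s]) s.toTerm2 :=
  plus_zero _

theorem join_append (L M : List (Term A)) : BSEq (join (L ++ M)) (.plus (join L) (join M)) := by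
  induction L with
  | nil => exact (plus_unit _).symm
  | cons s L ih => exact (plus_congr (refl _) ih).trans (plus_assoc _ _ _)

theorem seq_join_right (s : Term A) (M : List (Term A)) :
    BSEq (.seq s.toTerm2 (join M)) (join (M.map (Term.seq s))) := by
  induction M with
  | nil => exact seq_zero_r _
  | cons t M ih => exact (seq_distr_l _ _ _).trans (plus_congr (refl _) ih)

theorem seq_join (L M : List (Term A)) :
    BSEq (.seq (join L) (join M)) (join (L.flatMap fun s => M.map (Term.seq s))) := by
  induction L with
  | nil => exact seq_zero_l _
  | cons s L ih =>
    exact (seq_distr_r _ _ _).trans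
      ((plus_congr (seq_join_right s M) ih).trans (join_append _ _).symm)

theorem par_join_right (s : Term A) (M : List (Term A)) :
    BSEq (.par s.toTerm2 (join M)) (join (M.map (Term.par s))) := by
  induction M with
  | nil => exact par_zero_r _
  | cons t M ih => exact (par_distr _ _ _).trans (plus_congr (refl _) ih)

theorem par_join (L M : List (Term A)) :
    BSEq (.par (join L) (join M)) (join (L.flatMap fun s => M.map (Term.par s))) := by
  induction L with
  | nil => exact par_zero _
  | cons s L ih =>
    exact (par_distr_r _ _ _).trans
      ((plus_congr (par_join_right s M) ih).trans (join_append _ _).symm)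

theorem box_join (L : List (Term A)) : BSEq (.box (join L)) (join (L.map Term.box)) := by
  induction L with
  | nil => exact box_zero
  | cons s L ih => exact (box_plus _ _).trans (plus_congr (refl _) ih)

theorem join_terms (e : Term2 A) : BSEq e (join (terms e)) := by
  induction e with
  | zero => exact refl _
  | one => exact (join_singleton .one).symm
  | atom a => exact (join_singleton (.atom a)).symm
  | seq e f he hf => exact (seq_congr he hf).trans (seq_join _ _)
  | par e f he hf => exact (par_congr he hf).trans (par_join _ _)
  | plus e f he hf => exact (plus_congr he hf).trans (join_append _ _).symm
  | box e he => exact (box_congr he).trans (box_join _)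

end BSEq

namespace Term2

variable {A : Type}

theorem exists_mem_terms_iso (e : Term2 A) :
    ∀ P ∈ semT2 e, ∃ s ∈ terms e, Iso P (semT s) := by
  induction e with
  | zero => simp [semT2]
  | one => rintro P rfl; exact ⟨.one, List.mem_singleton_self _, Iso.refl _⟩
  | atom a => rintro P rfl; exact ⟨.atom a, List.mem_singleton_self _, Iso.refl _⟩
  | seq e f he hf =>
    rintro _ ⟨P, hP, Q, hQ, rfl⟩
    obtain ⟨s, hs, hPs⟩ := he P hP
    obtain ⟨t, ht, hQt⟩ := hf Q hQ
    exact ⟨.seq s t, List.mem_flatMap.mpr ⟨s, hs, List.mem_map_of_mem ht⟩, hPs.seqPB hQt⟩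
  | par e f he hf =>
    rintro _ ⟨P, hP, Q, hQ, rfl⟩
    obtain ⟨s, hs, hPs⟩ := he P hP
    obtain ⟨t, ht, hQt⟩ := hf Q hQ
    exact ⟨.par s t, List.mem_flatMap.mpr ⟨s, hs, List.mem_map_of_mem ht⟩, hPs.parPB hQt⟩
  | plus e f he hf =>
    rintro P (hP | hP)
    · obtain ⟨s, hs, hPs⟩ := he P hP
      exact ⟨s, List.mem_append_left _ hs, hPs⟩
    · obtain ⟨s, hs, hPs⟩ := hf P hP
      exact ⟨s, List.mem_append_right _ hs, hPs⟩
  | box e he =>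
    rintro _ ⟨P, hP, rfl⟩
    obtain ⟨s, hs, hPs⟩ := he P hP
    exact ⟨.box s, List.mem_map_of_mem hs, hPs.boxPB⟩

theorem exists_mem_semT2_iso (e : Term2 A) :
    ∀ s ∈ terms e, ∃ P ∈ semT2 e, Iso P (semT s) := by
  induction e with
  | zero => simp [terms]
  | one =>
    intro s hs
    obtain rfl := List.mem_singleton.mp hs
    exact ⟨onePB A, rfl, Iso.refl _⟩
  | atom a =>
    intro s hs
    obtain rfl := List.mem_singleton.mp hs
    exact ⟨atomPB a, rfl, Iso.refl _⟩
  | seq e f he hf =>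
    intro u hu
    obtain ⟨s, hs, t, ht, rfl⟩ : ∃ s ∈ terms e, ∃ t ∈ terms f, u = .seq s t := by
      simpa [terms, eq_comm] using hu
    obtain ⟨P, hP, hPs⟩ := he s hs
    obtain ⟨Q, hQ, hQt⟩ := hf t ht
    exact ⟨seqPB P Q, Set.mem_image2_of_mem hP hQ, hPs.seqPB hQt⟩
  | par e f he hf =>
    intro u hu
    obtain ⟨s, hs, t, ht, rfl⟩ : ∃ s ∈ terms e, ∃ t ∈ terms f, u = .par s t := by
      simpa [terms, eq_comm] using hu
    obtain ⟨P, hP, hPs⟩ := he s hs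
    obtain ⟨Q, hQ, hQt⟩ := hf t ht
    exact ⟨parPB P Q, Set.mem_image2_of_mem hP hQ, hPs.parPB hQt⟩
  | plus e f he hf =>
    intro s hs
    rcases List.mem_append.mp hs with hs | hs
    · obtain ⟨P, hP, hPs⟩ := he s hs
      exact ⟨P, Or.inl hP, hPs⟩
    · obtain ⟨P, hP, hPs⟩ := hf s hs
      exact ⟨P, Or.inr hP, hPs⟩
  | box e he =>
    intro u hu
    obtain ⟨s, hs, rfl⟩ := List.mem_map.mp hu
    obtain ⟨P, hP, hPs⟩ := he s hs
    exact ⟨boxPB P, Set.mem_image_of_mem _ hP, hPs.boxPB⟩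

end Term2

/-- Every extended term is provably a finite join of series–parallel terms, with
matching set-of-posets semantics up to isomorphism. -/
theorem expr_to_terms (A : Type) (e : Term2 A) :
    ∃ L : List (Term A),
      BSEq e (L.foldr (fun s acc => Term2.plus s.toTerm2 acc) Term2.zero) ∧
      (∀ P ∈ semT2 e, ∃ s ∈ L, Iso P (semT s)) ∧
      (∀ s ∈ L, ∃ P ∈ semT2 e, Iso P (semT s)) :=
  ⟨e.terms, BSEq.join_terms e, e.exists_mem_terms_iso, e.exists_mem_semT2_iso⟩
end
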